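/- Let n ≥ 2, let f : {1, …, ⌊n/2⌋} → ℝ be a nondecreasing function, and for a tree T on n vertices define F(T) = Σ_{e ∈ E(T)} f(μ_T(e)). If T and T' are trees on n vertices with T ⪯ T', then F(T) ≤ F(T'); moreover, if f is strictly increasing and T ≺ T', then F(T) < F(T'). -/

import Mathlib

namespace TreeOrder

attribute [local instance] Classical.propDecidable

variable {V : Type*} {W : Type*}

/-- `side G u v` = number of vertices strictly closer to `u` than to `v`;
for an edge `uv` of a tree this is the order of the component of `T - uv` containing `u`. -/
noncomputable def side [Fintype V] (G : SimpleGraph V) (u v : V) : ℕ :=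
  (Finset.univ.filter fun w => G.dist w u < G.dist w v).card

/-- `mu G u v = min (n_u(e), n_v(e))` for the edge `e = uv`. -/
noncomputable def mu [Fintype V] (G : SimpleGraph V) (u v : V) : ℕ :=
  min (side G u v) (side G v u)

/-- `mu` as a function on unordered pairs. -/
noncomputable def muE [Fintype V] (G : SimpleGraph V) : Sym2 V → ℕ :=
  Sym2.lift ⟨fun u v => mu G u v, fun _ _ => min_comm _ _⟩

/-- `r G i` = number of edges `e` of `G` with `μ(e) = i`. -/
noncomputable def r [Fintype V] (G : SimpleGraph V) (i : ℕ) : ℕ :=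
  (Finset.univ.filter fun e : Sym2 V => e ∈ G.edgeSet ∧ muE G e = i).card

/-- `tailSum G n k = Σ_{i=k}^{⌊n/2⌋} r_i(G)`. -/
noncomputable def tailSum [Fintype V] (G : SimpleGraph V) (n k : ℕ) : ℕ :=
  ∑ i ∈ Finset.Icc k (n / 2), r G i

/-- The order `⪯` on trees with `n` vertices, via edge division vectors. -/
def Preceq [Fintype V] [Fintype W] (n : ℕ) (G : SimpleGraph V) (H : SimpleGraph W) : Prop :=
  ∀ k, 1 ≤ k → k ≤ n / 2 → tailSum G n k ≤ tailSum H n k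

/-- The strict order `≺`. -/
def Prec [Fintype V] [Fintype W] (n : ℕ) (G : SimpleGraph V) (H : SimpleGraph W) : Prop :=
  Preceq n G H ∧ ∃ k, 1 ≤ k ∧ k ≤ n / 2 ∧ tailSum G n k < tailSum H n k

/-- Equality of edge division vectors `r(G) = r(H)`. -/
def SameEdgeDivision [Fintype V] [Fintype W] (n : ℕ) (G : SimpleGraph V)
    (H : SimpleGraph W) : Prop :=
  ∀ i, 1 ≤ i → i ≤ n / 2 → r G i = r H i

/-- `u` is a centroidal vertex: `n_u(e) ≥ n/2` for every edge `e` incident to `u`. -/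
def IsCentroidal [Fintype V] (G : SimpleGraph V) (u : V) : Prop :=
  ∀ v, G.Adj u v → Fintype.card V ≤ 2 * side G u v

/-- `u` is a proper centroidal vertex: `n_u(e) > ⌈n/2⌉` for every edge `e` incident to `u`. -/
def IsProperCentroidal [Fintype V] (G : SimpleGraph V) (u : V) : Prop :=
  ∀ v, G.Adj u v → (Fintype.card V + 1) / 2 < side G u v

/-- The edge `uv` is a center edge: `μ(uv) = ⌊n/2⌋`. -/
def IsCenterEdge [Fintype V] (G : SimpleGraph V) (u v : V) : Prop :=
  G.Adj u v ∧ mu G u v = Fintype.card V / 2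

/-- degree of a vertex -/
noncomputable def deg [Fintype V] (G : SimpleGraph V) (v : V) : ℕ :=
  (Finset.univ.filter fun w => G.Adj v w).card

/-- The path `P_n` on `n` vertices. -/
def pathG (n : ℕ) : SimpleGraph (Fin n) :=
  SimpleGraph.fromRel fun x y => (x : ℕ) + 1 = y

/-- The star `S_n` on `n` vertices. -/
def starG (n : ℕ) : SimpleGraph (Fin n) :=
  SimpleGraph.fromRel fun x _ => (x : ℕ) = 0

/-- The double star path `CP_{n;a,b}` : a path on `n - a - b` vertices (at positions
`a, …, n - b - 1`) with `a` pendent vertices attached to its first vertex and `b`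
pendent vertices attached to its last vertex. -/
def doubleStar (n a b : ℕ) : SimpleGraph (Fin n) :=
  SimpleGraph.fromRel fun x y =>
    ((x : ℕ) < a ∧ (y : ℕ) = a) ∨
    (a ≤ (x : ℕ) ∧ (x : ℕ) + 1 = y ∧ (y : ℕ) < n - b) ∨
    ((x : ℕ) = n - b - 1 ∧ n - b ≤ (y : ℕ))

/-- `CP_{n,k}^s` : a path `v_1 ⋯ v_k` (at positions `0, …, k-1`) with all
`n - k` pendent vertices attached to `v_s` (position `s - 1`). -/
def cpOne (n k s : ℕ) : SimpleGraph (Fin n) :=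
  SimpleGraph.fromRel fun x y =>
    ((x : ℕ) + 1 = y ∧ (y : ℕ) < k) ∨ ((x : ℕ) = s - 1 ∧ k ≤ (y : ℕ))

/-- The caterpillar `CP(n; n_1, …, n_k)` : a path `v_1 ⋯ v_k` (at positions `0, …, k-1`),
where pendent vertex `j` (for `k ≤ j < n`) is attached to the path vertex at
position `f j` (so `n_i = |{j : f j = i - 1}|`). -/
def caterpillar (n k : ℕ) (f : ℕ → ℕ) : SimpleGraph (Fin n) :=
  SimpleGraph.fromRel fun x y =>
    ((x : ℕ) + 1 = y ∧ (y : ℕ) < k) ∨ (k ≤ (y : ℕ) ∧ (x : ℕ) = f y)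

/-- The balanced starlike tree `SP_{n,q}` : the center is vertex `0`, and vertex
`j ≥ 1` lies on branch `(j - 1) % q` at depth `(j - 1)/q + 1`; so the `q` branches are
paths whose orders pairwise differ by at most `1`. -/
def balancedStar (n q : ℕ) : SimpleGraph (Fin n) :=
  SimpleGraph.fromRel fun x y =>
    ((x : ℕ) = 0 ∧ 1 ≤ (y : ℕ) ∧ (y : ℕ) ≤ q) ∨ (1 ≤ (x : ℕ) ∧ (x : ℕ) + q = y)

/-- The edge-moving transformation of `G` w.r.t. the edge `uv`: contract `uv` to `u`
(moving all edges at `v` to `u`) and attach `v` to `u` as a pendent vertex. -/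
def edgeMove (G : SimpleGraph V) (u v : V) : SimpleGraph V :=
  SimpleGraph.fromRel fun x y =>
    (G.Adj x y ∧ x ≠ v ∧ y ≠ v) ∨ (x = u ∧ y = v) ∨ (x = u ∧ G.Adj v y ∧ y ≠ u)

/-- The edge additive eccentric topological index `F(G) = Σ_{e ∈ E(G)} f(μ(e))`. -/
noncomputable def Fidx {V : Type*} [Fintype V] (f : ℕ → ℝ) (G : SimpleGraph V) : ℝ :=
  ∑ e ∈ Finset.univ.filter (fun e : Sym2 V => e ∈ G.edgeSet), f (muE G e)

/-! By summation by parts, `F(T') - F(T) = ∑_{k ≥ 2} (∑_{i ≥ k} (r_i(T') - r_i(T))) (f k - f (k - 1))`: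
the term of `f 1` drops out because both trees have `n - 1` edges, and under `T ⪯ T'` every
remaining term is a product of two nonnegative factors. -/

open Finset

section SummationByParts

theorem sum_Icc_sub_pred_eq (f : ℕ → ℝ) {i : ℕ} (hi : 1 ≤ i) :
    ∑ k ∈ Icc 2 i, (f k - f (k - 1)) = f i - f 1 := by
  induction i, hi using Nat.le_induction with
  | base => simp
  | succ i _ ih =>
    rw [sum_Icc_succ_top (by omega), ih]
    simp

theorem sum_Icc_mul_eq_tail_sums (d f : ℕ → ℝ) (m : ℕ) :
    ∑ i ∈ Icc 1 m, d i * f i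
      = (∑ i ∈ Icc 1 m, d i) * f 1
        + ∑ k ∈ Icc 2 m, (∑ i ∈ Icc k m, d i) * (f k - f (k - 1)) := by
  have hf : ∀ i ∈ Icc 1 m, d i * f i
      = d i * f 1 + ∑ k ∈ Icc 2 i, d i * (f k - f (k - 1)) := fun i hi => by
    rw [← mul_sum, sum_Icc_sub_pred_eq f (mem_Icc.1 hi).1]
    ring
  rw [sum_congr rfl hf, sum_add_distrib, ← sum_mul, sum_comm' (t' := Icc 2 m)
    (s' := fun k => Icc k m) (fun i k => by simp only [mem_Icc]; omega)]
  simp only [sum_mul]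

theorem sum_Icc_mul_nonneg_of_tail_sums_nonneg {d f : ℕ → ℝ} {m : ℕ}
    (hd : ∑ i ∈ Icc 1 m, d i = 0) (htail : ∀ k ∈ Icc 2 m, 0 ≤ ∑ i ∈ Icc k m, d i)
    (hf : ∀ k ∈ Icc 2 m, f (k - 1) ≤ f k) :
    0 ≤ ∑ i ∈ Icc 1 m, d i * f i := by
  rw [sum_Icc_mul_eq_tail_sums, hd, zero_mul, zero_add]
  exact sum_nonneg fun k hk => mul_nonneg (htail k hk) (sub_nonneg.2 (hf k hk))

theorem sum_Icc_mul_pos_of_tail_sums_nonneg {d f : ℕ → ℝ} {m : ℕ}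
    (hd : ∑ i ∈ Icc 1 m, d i = 0) (htail : ∀ k ∈ Icc 2 m, 0 ≤ ∑ i ∈ Icc k m, d i)
    (hpos : ∃ k ∈ Icc 2 m, 0 < ∑ i ∈ Icc k m, d i)
    (hf : ∀ k ∈ Icc 2 m, f (k - 1) < f k) :
    0 < ∑ i ∈ Icc 1 m, d i * f i := by
  rw [sum_Icc_mul_eq_tail_sums, hd, zero_mul, zero_add]
  obtain ⟨k, hk, hk_pos⟩ := hpos
  exact sum_pos' (fun k hk => mul_nonneg (htail k hk) (sub_nonneg.2 (hf k hk).le))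
    ⟨k, hk, mul_pos hk_pos (sub_pos.2 (hf k hk))⟩

end SummationByParts

section EdgeDivision

variable [Fintype V] {G : SimpleGraph V}

theorem side_add_side_le (G : SimpleGraph V) (u v : V) :
    side G u v + side G v u ≤ Fintype.card V := by
  rw [side, side, ← card_union_of_disjoint
    (disjoint_filter.2 fun _ _ h => not_lt_of_gt h)]
  exact card_le_univ _

theorem one_le_side {u v : V} (h : G.Adj u v) : 1 ≤ side G u v :=
  card_pos.2 ⟨u, by simp [SimpleGraph.dist_eq_one_iff_adj.2 h]⟩

theorem muE_mem_Icc {e : Sym2 V} (he : e ∈ G.edgeSet) :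
    muE G e ∈ Icc 1 (Fintype.card V / 2) := by
  induction e using Sym2.inductionOn with
  | _ u v =>
    have := side_add_side_le G u v
    have huv : G.Adj u v := he
    have := one_le_side huv
    have := one_le_side huv.symm
    change min (side G u v) (side G v u) ∈ _
    rw [mem_Icc]
    omega

theorem Fidx_eq_sum_r (f : ℕ → ℝ) (G : SimpleGraph V) :
    Fidx f G = ∑ i ∈ Icc 1 (Fintype.card V / 2), (r G i : ℝ) * f i := by
  rw [Fidx, ← sum_fiberwise_of_maps_to fun e he => muE_mem_Icc (mem_filter.1 he).2]
  refine sum_congr rfl fun i _ => ?_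
  rw [sum_congr rfl fun e he => congrArg f (mem_filter.1 he).2, sum_const, nsmul_eq_mul, r,
    filter_filter]

theorem tailSum_one_eq_card_edgeFinset (G : SimpleGraph V) :
    tailSum G (Fintype.card V) 1 = #G.edgeFinset := by
  have hedges : univ.filter (fun e : Sym2 V => e ∈ G.edgeSet) = G.edgeFinset := by
    ext; simp
  rw [tailSum, ← hedges, card_eq_sum_card_fiberwise fun _ he => muE_mem_Icc (mem_filter.1 he).2]
  simp only [r, filter_filter]

theorem tailSum_one_of_isTree (hG : G.IsTree) :
    tailSum G (Fintype.card V) 1 = Fintype.card V - 1 := by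
  rw [tailSum_one_eq_card_edgeFinset, ← hG.card_edgeFinset, Nat.add_sub_cancel]

end EdgeDivision

theorem stmt19_general {V W : Type*} [Fintype V] [Fintype W]
    (G : SimpleGraph V) (H : SimpleGraph W) (hG : G.IsTree) (hH : H.IsTree)
    (hcard : Fintype.card W = Fintype.card V)
    (f : ℕ → ℝ)
    (hmono : ∀ i j, 1 ≤ i → i ≤ j → j ≤ Fintype.card V / 2 → f i ≤ f j) :
    (Preceq (Fintype.card V) G H → Fidx f G ≤ Fidx f H) ∧
    ((∀ i j, 1 ≤ i → i < j → j ≤ Fintype.card V / 2 → f i < f j) →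
      Prec (Fintype.card V) G H → Fidx f G < Fidx f H) := by
  set n := Fintype.card V
  set d : ℕ → ℝ := fun i => (r H i : ℝ) - r G i
  have hdiff : Fidx f H - Fidx f G = ∑ i ∈ Icc 1 (n / 2), d i * f i := by
    rw [Fidx_eq_sum_r, Fidx_eq_sum_r, hcard, ← sum_sub_distrib]
    simp only [d, sub_mul]
  have htail (k : ℕ) : ∑ i ∈ Icc k (n / 2), d i = tailSum H n k - (tailSum G n k : ℝ) := by
    simp only [d, tailSum, sum_sub_distrib, Nat.cast_sum]
  have htot : tailSum G n 1 = tailSum H n 1 := by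
    have := tailSum_one_of_isTree hH
    rw [hcard] at this
    rw [tailSum_one_of_isTree hG, this]
  have hd : ∑ i ∈ Icc 1 (n / 2), d i = 0 := by rw [htail, htot, sub_self]
  have hle (hpre : Preceq n G H) (k : ℕ) (hk : k ∈ Icc 2 (n / 2)) :
      0 ≤ ∑ i ∈ Icc k (n / 2), d i := by
    rw [htail, sub_nonneg, Nat.cast_le]
    rw [mem_Icc] at hk
    exact hpre k (by omega) hk.2
  constructor
  · intro hpre
    refine sub_nonneg.1 (hdiff ▸ sum_Icc_mul_nonneg_of_tail_sums_nonneg hd (hle hpre) ?_)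
    intro k hk
    rw [mem_Icc] at hk
    exact hmono (k - 1) k (by omega) (by omega) hk.2
  · rintro hstrict ⟨hpre, k, hk1, hkn, hlt⟩
    have hk2 : 2 ≤ k := by
      by_contra! h
      obtain rfl : k = 1 := by omega
      exact hlt.ne htot
    refine sub_pos.1 (hdiff ▸ sum_Icc_mul_pos_of_tail_sums_nonneg hd (hle hpre)
      ⟨k, mem_Icc.2 ⟨hk2, hkn⟩, by rw [htail, sub_pos]; exact_mod_cast hlt⟩ ?_)
    intro k hk
    rw [mem_Icc] at hk
    exact hstrict (k - 1) k (by omega) (by omega) hk.2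

/-- Let `n ≥ 2`, let `f : {1, …, ⌊n/2⌋} → ℝ` be nondecreasing and define
`F(T) = Σ_{e ∈ E(T)} f(μ_T(e))` for trees `T` on `n` vertices. If `T ⪯ T'` then
`F(T) ≤ F(T')`; moreover if `f` is strictly increasing and `T ≺ T'` then `F(T) < F(T')`. -/
theorem stmt19 {V W : Type*} [Fintype V] [Fintype W]
    (G : SimpleGraph V) (H : SimpleGraph W) (hG : G.IsTree) (hH : H.IsTree)
    (hn : 2 ≤ Fintype.card V) (hcard : Fintype.card W = Fintype.card V)
    (f : ℕ → ℝ)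
    (hmono : ∀ i j, 1 ≤ i → i ≤ j → j ≤ Fintype.card V / 2 → f i ≤ f j) :
    (Preceq (Fintype.card V) G H → Fidx f G ≤ Fidx f H) ∧
    ((∀ i j, 1 ≤ i → i < j → j ≤ Fintype.card V / 2 → f i < f j) →
      Prec (Fintype.card V) G H → Fidx f G < Fidx f H) :=
  stmt19_general G H hG hH hcard f hmono

end TreeOrder
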